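/- arXiv:1906.04620 — 3 statements merged into one kernel-verified Lean document; each statement's English description precedes it below -/
import Mathlib

section
/- Let Γ be a circulant on a finite vertex type V and let b ≥ 1. Then the lexicographic product Γ[Kbar_b] is a circulant. -/
/-- A permutation `e` is an automorphism of the digraph with adjacency `Adj`. -/
def IsDigraphAut {V : Type*} (Adj : V → V → Prop) (e : Equiv.Perm V) : Prop :=
  ∀ x y, Adj x y ↔ Adj (e x) (e y)

/-- The automorphism group of a digraph, as a subgroup of the permutation group. -/
def autGroup {V : Type*} (Adj : V → V → Prop) : Subgroup (Equiv.Perm V) where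
  carrier := {e | IsDigraphAut Adj e}
  one_mem' := by intro x y; exact Iff.rfl
  mul_mem' := by
    intro a b ha hb x y
    exact (hb x y).trans (ha (b x) (b y))
  inv_mem' := by
    intro a ha x y
    simpa using (ha (a⁻¹ x) (a⁻¹ y)).symm

/-- A digraph is arc-transitive if its automorphism group is transitive on arcs. -/
def ArcTransitive {V : Type*} (Adj : V → V → Prop) : Prop :=
  ∀ x y u v, Adj x y → Adj u v → ∃ e ∈ autGroup Adj, e x = u ∧ e y = v

/-- A subgroup of the permutation group of `V` is regular on `V`. -/
def IsRegularSub {V : Type*} (H : Subgroup (Equiv.Perm V)) : Prop :=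
  ∀ u v : V, ∃! h : H, (h : Equiv.Perm V) u = v

/-- A circulant: the automorphism group contains a regular cyclic subgroup. -/
def IsCirculant {V : Type*} (Adj : V → V → Prop) : Prop :=
  ∃ H : Subgroup (Equiv.Perm V), H ≤ autGroup Adj ∧ IsCyclic H ∧ IsRegularSub H

/-- A normal circulant: the automorphism group contains a regular cyclic subgroup
that is normal in the automorphism group. -/
def IsNormalCirculant {V : Type*} (Adj : V → V → Prop) : Prop :=
  ∃ H : Subgroup (Equiv.Perm V), H ≤ autGroup Adj ∧ IsCyclic H ∧ IsRegularSub H ∧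
    ∀ e ∈ autGroup Adj, ∀ h ∈ H, e * h * e⁻¹ ∈ H

/-- Tensor (direct) product of digraphs. -/
def tensorAdj {V₁ V₂ : Type*} (Adj₁ : V₁ → V₁ → Prop) (Adj₂ : V₂ → V₂ → Prop) :
    V₁ × V₂ → V₁ × V₂ → Prop :=
  fun p q => Adj₁ p.1 q.1 ∧ Adj₂ p.2 q.2

/-- Lexicographic product `Γ[Kbar_b]` with the edgeless digraph on `b` vertices. -/
def lexAdj {V : Type*} (Adj : V → V → Prop) (b : ℕ) : V × Fin b → V × Fin b → Prop :=
  fun p q => Adj p.1 q.1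

/-- Digraph isomorphism. -/
def DigraphIso {V₁ V₂ : Type*} (Adj₁ : V₁ → V₁ → Prop) (Adj₂ : V₂ → V₂ → Prop) : Prop :=
  ∃ e : V₁ ≃ V₂, ∀ x y, Adj₁ x y ↔ Adj₂ (e x) (e y)

/-- Connectedness: the reflexive–symmetric–transitive closure of adjacency
relates every pair of vertices. -/
def DigraphConnected {V : Type*} (Adj : V → V → Prop) : Prop :=
  ∀ u v : V, Relation.ReflTransGen (fun a b => Adj a b ∨ Adj b a) u v

/-- R-thick digraph: two distinct vertices with the same in- and out-neighbourhoods. -/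
def RThick {V : Type*} (Adj : V → V → Prop) : Prop :=
  ∃ u v : V, u ≠ v ∧ (∀ w, Adj u w ↔ Adj v w) ∧ (∀ w, Adj w u ↔ Adj w v)

/-- The directed 4-cycle on `ZMod 4`. -/
def C4Adj : ZMod 4 → ZMod 4 → Prop := fun x y => y - x = 1 ∨ y - x = 3

/-- Cayley digraph of a group `G` with connection set `S`. -/
def cayAdj (G : Type*) [Group G] (S : Set G) : G → G → Prop :=
  fun x y => y * x⁻¹ ∈ S

/-- The right-regular representation of `G` inside `Equiv.Perm G`. -/
def rightReg (G : Type*) [Group G] : Subgroup (Equiv.Perm G) where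
  carrier := {e | ∃ g : G, ∀ x, e x = x * g}
  one_mem' := ⟨1, by simp⟩
  mul_mem' := by
    rintro a b ⟨g, hg⟩ ⟨h, hh⟩
    exact ⟨h * g, fun x => by simp [Equiv.Perm.mul_apply, hh, hg, mul_assoc]⟩
  inv_mem' := by
    rintro a ⟨g, hg⟩
    refine ⟨g⁻¹, fun x => a.injective ?_⟩
    rw [Equiv.Perm.inv_def, Equiv.apply_symm_apply, hg]
    simp

/-- Cayley digraph of `ZMod n` with connection set `S`. -/
def zcayAdj (n : ℕ) (S : Set (ZMod n)) : ZMod n → ZMod n → Prop :=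
  fun x y => y - x ∈ S

/-- The translation subgroup of `Equiv.Perm (ZMod n)`. -/
def transSub (n : ℕ) : Subgroup (Equiv.Perm (ZMod n)) where
  carrier := {e | ∃ g : ZMod n, ∀ x, e x = x + g}
  one_mem' := ⟨0, by simp⟩
  mul_mem' := by
    rintro a b ⟨g, hg⟩ ⟨h, hh⟩
    exact ⟨h + g, fun x => by simp [Equiv.Perm.mul_apply, hh, hg, add_assoc]⟩
  inv_mem' := by
    rintro a ⟨g, hg⟩
    refine ⟨-g, fun x => a.injective ?_⟩
    rw [Equiv.Perm.inv_def, Equiv.apply_symm_apply, hg]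
    simp

/-!
A regular cyclic group of automorphisms of order `n` labels the vertices of `Γ` by `ZMod n` so that
`Γ` becomes the Cayley digraph `Cay(ZMod n, S)`. Then `x ↦ (x mod n, ⌊x / n⌋)` identifies
`Γ[Kbar_b]` with `Cay(ZMod (n * b), π⁻¹ S)` for the reduction `π : ZMod (n * b) → ZMod n`, and
Cayley digraphs of `ZMod N` are circulants through their translations.
-/

theorem isRegularSub_iff_bijective {V : Type*} (H : Subgroup (Equiv.Perm V)) :
    IsRegularSub H ↔ ∀ u : V, Function.Bijective fun h : H => (h : Equiv.Perm V) u :=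
  forall_congr' fun _ => (Function.bijective_iff_existsUnique _).symm

theorem DigraphIso.trans {V₁ V₂ V₃ : Type*} {Adj₁ : V₁ → V₁ → Prop} {Adj₂ : V₂ → V₂ → Prop}
    {Adj₃ : V₃ → V₃ → Prop} (h₁₂ : DigraphIso Adj₁ Adj₂) (h₂₃ : DigraphIso Adj₂ Adj₃) :
    DigraphIso Adj₁ Adj₃ := by
  obtain ⟨e, he⟩ := h₁₂
  obtain ⟨f, hf⟩ := h₂₃
  exact ⟨e.trans f, fun x y => (he x y).trans (hf (e x) (e y))⟩

theorem DigraphIso.lexAdj {V₁ V₂ : Type*} {Adj₁ : V₁ → V₁ → Prop} {Adj₂ : V₂ → V₂ → Prop}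
    (h : DigraphIso Adj₁ Adj₂) (b : ℕ) : DigraphIso (lexAdj Adj₁ b) (lexAdj Adj₂ b) := by
  obtain ⟨e, he⟩ := h
  exact ⟨e.prodCongr (Equiv.refl _), fun p q => he p.1 q.1⟩

theorem IsCirculant.of_digraphIso {V₁ V₂ : Type*} {Adj₁ : V₁ → V₁ → Prop}
    {Adj₂ : V₂ → V₂ → Prop} (hiso : DigraphIso Adj₁ Adj₂) (h : IsCirculant Adj₁) :
    IsCirculant Adj₂ := by
  obtain ⟨e, he⟩ := hiso
  obtain ⟨H, hH, hcyc, hreg⟩ := h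
  let φ := e.permCongrHom.subgroupMap H
  refine ⟨H.map e.permCongrHom.toMonoidHom, ?_, isCyclic_of_surjective φ φ.surjective, ?_⟩
  · rintro _ ⟨σ, hσ, rfl⟩ x y
    simpa [Equiv.permCongrHom_coe, he] using hH hσ (e.symm x) (e.symm y)
  · rw [isRegularSub_iff_bijective] at hreg ⊢
    intro u
    have hconj : (fun σ : H.map e.permCongrHom.toMonoidHom => (σ : Equiv.Perm V₂) u) =
        e ∘ (fun h : H => (h : Equiv.Perm V₁) (e.symm u)) ∘ φ.symm := by
      funext σ
      obtain ⟨h, rfl⟩ := φ.surjective σ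
      simp [φ, MulEquiv.coe_subgroupMap_apply, Equiv.permCongrHom_coe]
    rw [hconj]
    exact e.bijective.comp ((hreg _).comp φ.symm.bijective)

theorem isCirculant_zcayAdj (N : ℕ) (S : Set (ZMod N)) : IsCirculant (zcayAdj N S) := by
  let φ : Multiplicative (ZMod N) →* Equiv.Perm (ZMod N) :=
    MonoidHom.mk' (fun c => Equiv.addRight c.toAdd) fun a c => by
      ext x
      simp [add_comm a.toAdd c.toAdd, add_assoc]
  have hrange : transSub N = φ.range := by
    ext σ
    constructor
    · rintro ⟨g, hg⟩
      exact ⟨Multiplicative.ofAdd g, Equiv.ext fun x => (hg x).symm⟩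
    · rintro ⟨c, rfl⟩
      exact ⟨c.toAdd, fun x => rfl⟩
  refine ⟨transSub N, ?_, ?_, ?_⟩
  · rintro σ ⟨g, hg⟩ x y
    simp only [zcayAdj, hg, add_sub_add_right_eq_sub]
  · rw [hrange]
    exact isCyclic_of_surjective φ.rangeRestrict φ.rangeRestrict_surjective
  · intro u v
    refine ⟨⟨Equiv.addRight (v - u), v - u, fun x => rfl⟩, by simp, ?_⟩
    rintro ⟨σ, g, hg⟩ hσ
    have hg' : g = v - u := by
      rw [← hσ]
      simp [hg]
    ext x
    simp [hg, hg']

theorem IsCirculant.exists_digraphIso_zcayAdj {V : Type*} [Nonempty V] {Adj : V → V → Prop}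
    (h : IsCirculant Adj) : ∃ S, DigraphIso (zcayAdj (Nat.card V) S) Adj := by
  obtain ⟨H, hH, hcyc, hreg⟩ := h
  let v₀ : V := Classical.arbitrary V
  let orbit : H ≃ V :=
    Equiv.ofBijective _ ((isRegularSub_iff_bijective H).1 hreg v₀)
  rw [← Nat.card_congr orbit]
  let ψ := zmodCyclicMulEquiv hcyc
  let E : ZMod (Nat.card H) ≃ V := (Multiplicative.ofAdd.trans ψ.toEquiv).trans orbit
  have hE : ∀ x z, E (x + z) = (ψ (Multiplicative.ofAdd x) : Equiv.Perm V) (E z) := by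
    intro x z
    simp [E, orbit, ofAdd_add, Equiv.Perm.mul_apply]
  have hE0 : E 0 = v₀ := by simp [E, orbit]
  refine ⟨{x | Adj v₀ (E x)}, E, fun x y => ?_⟩
  have hy : E y = (ψ (Multiplicative.ofAdd x) : Equiv.Perm V) (E (y - x)) := by
    rw [← hE, add_sub_cancel]
  have hx : E x = (ψ (Multiplicative.ofAdd x) : Equiv.Perm V) v₀ := by
    rw [← hE0, ← hE, add_zero]
  rw [hx, hy]
  exact hH (ψ _).2 _ _

theorem exists_equiv_zmod_mul_prod_fin (n b : ℕ) [NeZero n] [NeZero b] :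
    ∃ F : ZMod (n * b) ≃ ZMod n × Fin b,
      ∀ x, (F x).1 = ZMod.castHom (dvd_mul_right n b) (ZMod n) x := by
  let f : ZMod (n * b) → ZMod n × Fin b :=
    fun x => (ZMod.cast x, ⟨x.val / n, Nat.div_lt_of_lt_mul (ZMod.val_lt x)⟩)
  have hf : Function.Injective f := by
    intro x y hxy
    simp only [f, Prod.mk.injEq, Fin.mk.injEq] at hxy
    obtain ⟨hmod, hdiv⟩ := hxy
    rw [ZMod.cast_eq_val, ZMod.cast_eq_val, ZMod.natCast_eq_natCast_iff'] at hmod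
    apply ZMod.val_injective
    rw [← Nat.div_add_mod x.val n, ← Nat.div_add_mod y.val n, hdiv, hmod]
  exact ⟨Equiv.ofBijective f ((Fintype.bijective_iff_injective_and_card f).2 ⟨hf, by simp⟩),
    fun _ => rfl⟩

theorem digraphIso_zcayAdj_lexAdj (n b : ℕ) [NeZero n] [NeZero b] (S : Set (ZMod n)) :
    DigraphIso (zcayAdj (n * b) (ZMod.castHom (dvd_mul_right n b) (ZMod n) ⁻¹' S))
      (lexAdj (zcayAdj n S) b) := by
  obtain ⟨F, hF⟩ := exists_equiv_zmod_mul_prod_fin n b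
  exact ⟨F, fun x y => by simp only [zcayAdj, lexAdj, hF, Set.mem_preimage, map_sub]⟩

theorem stmt3 {V : Type*} [Fintype V] [Nonempty V] (Adj : V → V → Prop)
    (hcirc : IsCirculant Adj) (b : ℕ) (hb : 1 ≤ b) :
    IsCirculant (lexAdj Adj b) := by
  obtain ⟨S, hS⟩ := hcirc.exists_digraphIso_zcayAdj
  have : NeZero b := ⟨by omega⟩
  exact (isCirculant_zcayAdj _ _).of_digraphIso
    ((digraphIso_zcayAdj_lexAdj _ b S).trans (hS.lexAdj b))
end

section
/- Let n ≥ 1 and let S ⊆ ZMod n generate the additive group ZMod n. Suppose Cay(ZMod n, S) is arc-transitive and the translation subgroup T̂ is normal in Aut(Cay(ZMod n, S)). Then every element s ∈ S generates the additive group ZMod n, and the group Aut(ZMod n, S) of additive automorphisms preserving S acts regularly on S: for all s, t ∈ S there is exactly one additive group automorphism α of ZMod n with α '' S = S and α s = t. -/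
namespace ZMod

theorem map_mem_zmultiples {n : ℕ} (f : ZMod n →+ ZMod n) (x : ZMod n) :
    f x ∈ AddSubgroup.zmultiples x := by
  have hmul : f x = f 1 * x := by
    rw [mul_comm, ← x.intCast_zmod_cast, ← zsmul_eq_mul, ← map_zsmul, zsmul_one]
  exact ⟨cast (f 1), by simp only [hmul, zsmul_eq_mul, intCast_zmod_cast]⟩

theorem map_add_of_conj_mem_transSub {n : ℕ} {e : Equiv.Perm (ZMod n)} (he₀ : e 0 = 0)
    (hnorm : ∀ h ∈ transSub n, e * h * e⁻¹ ∈ transSub n) (x y : ZMod n) :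
    e (x + y) = e x + e y := by
  obtain ⟨g, hg⟩ := hnorm (Equiv.addRight y) ⟨y, fun _ => rfl⟩
  have he₀' : e.symm 0 = 0 := e.symm_apply_eq.2 he₀.symm
  have hg₀ : e y = g := by simpa [he₀'] using hg 0
  simpa [hg₀] using hg (e x)

theorem image_eq_of_mem_autGroup_zcayAdj {n : ℕ} {S : Set (ZMod n)} {e : Equiv.Perm (ZMod n)}
    (he : e ∈ autGroup (zcayAdj n S)) (he₀ : e 0 = 0) : ⇑e '' S = S := by
  have hmem (x : ZMod n) : x ∈ S ↔ e x ∈ S := by simpa [zcayAdj, he₀] using he 0 x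
  ext y
  rw [Equiv.image_eq_preimage_symm, Set.mem_preimage, hmem, Equiv.apply_symm_apply]

theorem exists_addEquiv_image_eq_of_arcTransitive {n : ℕ} {S : Set (ZMod n)}
    (hat : ArcTransitive (zcayAdj n S))
    (hnorm : ∀ e ∈ autGroup (zcayAdj n S), ∀ h ∈ transSub n, e * h * e⁻¹ ∈ transSub n)
    {s t : ZMod n} (hs : s ∈ S) (ht : t ∈ S) :
    ∃ α : ZMod n ≃+ ZMod n, ⇑α '' S = S ∧ α s = t := by
  obtain ⟨e, he, he₀, hes⟩ :=
    hat 0 s 0 t (by simpa [zcayAdj] using hs) (by simpa [zcayAdj] using ht)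
  exact ⟨AddEquiv.mk' e (map_add_of_conj_mem_transSub he₀ (hnorm e he)),
    image_eq_of_mem_autGroup_zcayAdj he he₀, hes⟩

theorem zmultiples_eq_top_of_exists_map_eq {n : ℕ} {S : Set (ZMod n)}
    (hgen : AddSubgroup.closure S = ⊤) {s : ZMod n}
    (hmap : ∀ t ∈ S, ∃ f : ZMod n →+ ZMod n, f s = t) :
    AddSubgroup.zmultiples s = ⊤ := by
  rw [eq_top_iff, ← hgen, AddSubgroup.closure_le]
  intro t ht
  obtain ⟨f, rfl⟩ := hmap t ht
  exact map_mem_zmultiples f s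

end ZMod

theorem AddEquiv.ext_of_zmultiples_eq_top {G H : Type*} [AddGroup G] [AddGroup H] {s : G}
    (hs : AddSubgroup.zmultiples s = ⊤) {α β : G ≃+ H} (h : α s = β s) : α = β :=
  AddEquiv.toAddMonoidHom_injective <|
    AddMonoidHom.eq_of_eqOn_dense (by rwa [← AddSubgroup.zmultiples_eq_closure])
      (Set.eqOn_singleton.2 h)

theorem stmt8_general (n : ℕ) (S : Set (ZMod n))
    (hgen : AddSubgroup.closure S = ⊤)
    (hat : ArcTransitive (zcayAdj n S))
    (hnorm : ∀ e ∈ autGroup (zcayAdj n S), ∀ h ∈ transSub n, e * h * e⁻¹ ∈ transSub n) :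
    (∀ s ∈ S, AddSubgroup.zmultiples s = ⊤) ∧
    (∀ s ∈ S, ∀ t ∈ S, ∃! α : ZMod n ≃+ ZMod n, (⇑α '' S = S) ∧ α s = t) := by
  have hcyc : ∀ s ∈ S, AddSubgroup.zmultiples s = ⊤ := by
    intro s hs
    refine ZMod.zmultiples_eq_top_of_exists_map_eq hgen fun t ht => ?_
    obtain ⟨α, -, hαs⟩ := ZMod.exists_addEquiv_image_eq_of_arcTransitive hat hnorm hs ht
    exact ⟨α, hαs⟩
  refine ⟨hcyc, fun s hs t ht => ?_⟩
  obtain ⟨α, hα⟩ := ZMod.exists_addEquiv_image_eq_of_arcTransitive hat hnorm hs ht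
  exact ⟨α, hα, fun β hβ => AddEquiv.ext_of_zmultiples_eq_top (hcyc s hs) (hβ.2.trans hα.2.symm)⟩

theorem stmt8 (n : ℕ) (hn : 1 ≤ n) (S : Set (ZMod n))
    (hgen : AddSubgroup.closure S = ⊤)
    (hat : ArcTransitive (zcayAdj n S))
    (hnorm : ∀ e ∈ autGroup (zcayAdj n S), ∀ h ∈ transSub n, e * h * e⁻¹ ∈ transSub n) :
    (∀ s ∈ S, AddSubgroup.zmultiples s = ⊤) ∧
    (∀ s ∈ S, ∀ t ∈ S, ∃! α : ZMod n ≃+ ZMod n, (⇑α '' S = S) ∧ α s = t) :=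
  stmt8_general n S hgen hat hnorm
end

section
/- Let G be a finite group and S ⊆ G with 1 ∉ S, and suppose the Cayley digraph Γ = Cay(G,S) is a normal Cayley digraph (the right-regular representation Ĝ is normal in Aut(Γ)). If Γ is R-thick, then |G| ≤ 4. -/
/-! If `u ≠ v` have the same in- and out-neighbourhoods, the transposition `(u v)` is an
automorphism of `Cay(G,S)`, so normality forces it to normalise `Ĝ`. When `|G| ≥ 5`, the
conjugate of a right translation `ρ_g` by `(u v)` is a right translation agreeing with `ρ_g` at
any `x` with `x, x g ∉ {u, v}`, so it is `ρ_g` itself; evaluated at `u` this means `g = 1` or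
`v g = u`, which fails for any `g ∉ {1, v⁻¹u}`. -/

open Equiv

theorem Finset.exists_notMem_of_card_lt_card_univ {α : Type*} [Fintype α] {s : Finset α}
    (h : s.card < Fintype.card α) : ∃ x, x ∉ s := by
  by_contra! hs
  exact h.ne (by rw [← card_univ, eq_univ_of_forall hs])

theorem Equiv.swap_apply_iff {α : Type*} [DecidableEq α] {P : α → Prop} {u v : α}
    (h : P u ↔ P v) (a : α) : P (swap u v a) ↔ P a := by
  rw [swap_apply_def]
  split_ifs with hu hv
  · rw [hu, h]
  · rw [hv, h]
  · rfl

theorem swap_mem_autGroup {V : Type*} [DecidableEq V] {Adj : V → V → Prop} {u v : V}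
    (hout : ∀ w, Adj u w ↔ Adj v w) (hin : ∀ w, Adj w u ↔ Adj w v) :
    swap u v ∈ autGroup Adj := fun x y =>
  (swap_apply_iff (P := (Adj · y)) (hout y) x).symm.trans
    (swap_apply_iff (P := Adj (swap u v x)) (hin _) y).symm

section RightRegular

variable {G : Type*} [Group G]

theorem mulRight_mem_rightReg (g : G) : Equiv.mulRight g ∈ rightReg G := ⟨g, fun _ => rfl⟩

variable [DecidableEq G]

theorem swap_conj_mulRight_eq [Fintype G] (hcard : 4 < Fintype.card G) {u v g : G}
    (h : swap u v * Equiv.mulRight g * (swap u v)⁻¹ ∈ rightReg G) :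
    swap u v * Equiv.mulRight g * (swap u v)⁻¹ = Equiv.mulRight g := by
  obtain ⟨g', hg'⟩ := h
  obtain ⟨x, hx⟩ := Finset.exists_notMem_of_card_lt_card_univ
    (s := {u, v, u * g⁻¹, v * g⁻¹}) (Finset.card_le_four.trans_lt hcard)
  simp only [Finset.mem_insert, Finset.mem_singleton, not_or] at hx
  obtain ⟨hxu, hxv, hxug, hxvg⟩ := hx
  have hxg_ne_u : x * g ≠ u := fun h => hxug (by rw [← h, mul_inv_cancel_right])
  have hxg_ne_v : x * g ≠ v := fun h => hxvg (by rw [← h, mul_inv_cancel_right])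
  have hg'g : g' = g := by
    have hx' := hg' x
    simp only [Perm.mul_apply, swap_inv, swap_apply_of_ne_of_ne hxu hxv, coe_mulRight,
      swap_apply_of_ne_of_ne hxg_ne_u hxg_ne_v] at hx'
    exact (mul_left_cancel hx').symm
  ext y
  rw [hg' y, hg'g, coe_mulRight]

theorem eq_one_or_mul_eq_of_swap_conj_mulRight_eq {u v g : G} (huv : u ≠ v)
    (h : swap u v * Equiv.mulRight g * (swap u v)⁻¹ = Equiv.mulRight g) : g = 1 ∨ v * g = u := by
  have hu := congrArg (· u) h
  simp only [Perm.mul_apply, swap_inv, swap_apply_left, coe_mulRight] at hu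
  by_cases hv : v * g = v
  · exact Or.inl (mul_eq_left.mp hv)
  by_cases hvu : v * g = u
  · exact Or.inr hvu
  rw [swap_apply_of_ne_of_ne hvu hv] at hu
  exact absurd (mul_right_cancel hu).symm huv

theorem card_le_four_of_swap_conj_mem_rightReg [Fintype G] {u v : G} (huv : u ≠ v)
    (h : ∀ g : G, swap u v * Equiv.mulRight g * (swap u v)⁻¹ ∈ rightReg G) :
    Fintype.card G ≤ 4 := by
  by_contra! hcard
  obtain ⟨g, hg⟩ := Finset.exists_notMem_of_card_lt_card_univ
    (s := {1, v⁻¹ * u}) (Finset.card_le_two.trans_lt (by omega))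
  simp only [Finset.mem_insert, Finset.mem_singleton, not_or] at hg
  rcases eq_one_or_mul_eq_of_swap_conj_mulRight_eq huv (swap_conj_mulRight_eq hcard (h g))
    with hg1 | hvg
  · exact hg.1 hg1
  · exact hg.2 (by rw [← hvg, inv_mul_cancel_left])

end RightRegular

theorem stmt13_general {G : Type*} [Group G] [Fintype G] (S : Set G)
    (hnorm : ∀ e ∈ autGroup (cayAdj G S), ∀ h ∈ rightReg G, e * h * e⁻¹ ∈ rightReg G)
    (hthick : RThick (cayAdj G S)) :
    Fintype.card G ≤ 4 := by
  classical
  obtain ⟨u, v, huv, hout, hin⟩ := hthick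
  exact card_le_four_of_swap_conj_mem_rightReg huv fun g =>
    hnorm _ (swap_mem_autGroup hout hin) _ (mulRight_mem_rightReg g)

theorem stmt13 {G : Type*} [Group G] [Fintype G] (S : Set G) (h1 : (1 : G) ∉ S)
    (hnorm : ∀ e ∈ autGroup (cayAdj G S), ∀ h ∈ rightReg G, e * h * e⁻¹ ∈ rightReg G)
    (hthick : RThick (cayAdj G S)) :
    Fintype.card G ≤ 4 :=
  stmt13_general S hnorm hthick
end
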